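/- arXiv:math/0502032 — 3 statements merged into one kernel-verified Lean document; each statement's English description precedes it below -/
import Mathlib

section
/- Let K : ℝ → ℝ be smooth, compactly supported, nonnegative, with ∫_ℝ K(t) dt = 1. There exists C > 0, depending only on K, such that for every bounded measurable g : ℝ → ℝ, every interval I ⊆ ℝ, and all 0 < S ≤ T: inf_{t ∈ I} (K_T * g)(t) ≥ inf_{t ∈ I − T·supp(K)} (K_S * g)(t) − C·(S/T)·‖g‖_{L^∞}, and sup_{t ∈ I} (K_T * g)(t) ≤ sup_{t ∈ I − T·supp(K)} (K_S * g)(t) + C·(S/T)·‖g‖_{L^∞}. Here I − T·supp(K) = { t − T s : t ∈ I, s ∈ supp(K) }. -/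
open MeasureTheory Set Function
open scoped Convolution

/-- The rescaling `K_T(t) = (1/T) K(t/T)`. -/
noncomputable def resc (K : ℝ → ℝ) (T t : ℝ) : ℝ := (1 / T) * K (t / T)

/-- The smoothed average `(K_T * g)(t) = ∫ K_T(t − s) g(s) ds`. -/
noncomputable def smoothAvg (K : ℝ → ℝ) (T : ℝ) (g : ℝ → ℝ) (t : ℝ) : ℝ :=
  ∫ s, resc K T (t - s) * g s

/-- The set `I − T·supp(K) = { t − T s : t ∈ I, s ∈ supp K }`. -/
def shiftedSet (I : Set ℝ) (T : ℝ) (K : ℝ → ℝ) : Set ℝ :=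
  {u : ℝ | ∃ t ∈ I, ∃ s ∈ tsupport K, u = t - T * s}

lemma resc_nonneg {K : ℝ → ℝ} (hKpos : ∀ t, 0 ≤ K t) {U : ℝ} (hU : 0 < U) (x : ℝ) :
    0 ≤ resc K U x := mul_nonneg (by positivity) (hKpos _)

lemma resc_continuous {K : ℝ → ℝ} (hK : Continuous K) (U : ℝ) : Continuous (resc K U) :=
  continuous_const.mul (hK.comp (continuous_id.div_const U))

lemma resc_mem_tsupport {K : ℝ → ℝ} {U x : ℝ} (hx : resc K U x ≠ 0) :
    x / U ∈ tsupport K := by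
  apply subset_tsupport
  intro h
  exact hx (by simp [resc, h])

lemma resc_abs_le {K : ℝ → ℝ} {R : ℝ} (hKR : ∀ y ∈ tsupport K, |y| ≤ R) {U x : ℝ}
    (hU : 0 < U) (hx : resc K U x ≠ 0) : |x| ≤ U * R := by
  have h := hKR _ (resc_mem_tsupport hx)
  rw [abs_div, abs_of_pos hU, div_le_iff₀ hU] at h
  linarith

lemma resc_hasCompactSupport {K : ℝ → ℝ} {R : ℝ} (hKR : ∀ y ∈ tsupport K, |y| ≤ R)
    {U : ℝ} (hU : 0 < U) : HasCompactSupport (resc K U) := by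
  apply HasCompactSupport.intro (isCompact_Icc (a := -(U*R)) (b := U*R))
  intro x hx
  by_contra h
  have := abs_le.1 (resc_abs_le hKR hU h)
  exact hx ⟨this.1, this.2⟩

lemma resc_integral {K : ℝ → ℝ} (hKint : ∫ t, K t = 1) {U : ℝ} (hU : 0 < U) :
    ∫ x, resc K U x = 1 := by
  have h1 : ∫ x, resc K U x = (1/U) * ∫ x, K (x/U) := by
    simp only [resc]; rw [integral_const_mul]
  rw [h1, Measure.integral_comp_div K U, hKint, abs_of_pos hU, smul_eq_mul]
  field_simp

/-- integrand integrability -/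
lemma integrand_integrable {F g : ℝ → ℝ} (hFc : Continuous F) (hFs : HasCompactSupport F)
    (hg : Measurable g) {B : ℝ} (hB : ∀ t, |g t| ≤ B) (x : ℝ) :
    Integrable (fun s => F (x - s) * g s) := by
  have h1 : Integrable (fun s => F (x - s)) :=
    (hFc.integrable_of_hasCompactSupport hFs).comp_sub_left x
  refine Integrable.mono' (h1.norm.mul_const B)
    (((hFc.comp (continuous_const.sub continuous_id)).measurable.mul hg).aestronglyMeasurable)
    (ae_of_all _ fun s => ?_)
  rw [norm_mul]
  exact mul_le_mul_of_nonneg_left (by simpa [Real.norm_eq_abs] using hB s) (norm_nonneg _)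

/-- smoothAvg is uniformly bounded by B -/
lemma smoothAvg_abs_le {K g : ℝ → ℝ} (hKc : Continuous K) (hKpos : ∀ t, 0 ≤ K t)
    (hKint : ∫ t, K t = 1) {R : ℝ} (hKR : ∀ y ∈ tsupport K, |y| ≤ R)
    (hg : Measurable g) {B : ℝ} (hB : ∀ t, |g t| ≤ B) {U : ℝ} (hU : 0 < U) (x : ℝ) :
    |smoothAvg K U g x| ≤ B := by
  have hrc := resc_continuous hKc U
  have hrs := resc_hasCompactSupport hKR hU
  have hri : Integrable (resc K U) volume := hrc.integrable_of_hasCompactSupport hrs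
  have h2 : ∫ s, resc K U (x - s) = 1 := by
    rw [integral_sub_left_eq_self (resc K U) volume x]; exact resc_integral hKint hU
  calc |smoothAvg K U g x| ≤ ∫ s, ‖resc K U (x-s) * g s‖ := by
        rw [← Real.norm_eq_abs]
        exact norm_integral_le_integral_norm (fun s => resc K U (x-s) * g s)
    _ ≤ ∫ s, resc K U (x-s) * B := by
        refine integral_mono (integrand_integrable hrc hrs hg hB x).norm
          ((hri.comp_sub_left x).mul_const B) (fun s => ?_)
        rw [norm_mul, Real.norm_of_nonneg (resc_nonneg hKpos hU _)]
        exact mul_le_mul_of_nonneg_left (by simpa [Real.norm_eq_abs] using hB s)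
          (resc_nonneg hKpos hU _)
    _ = B := by rw [integral_mul_const, h2, one_mul]

/-- smoothAvg as mathlib convolution -/
lemma smoothAvg_eq_convolution (K : ℝ → ℝ) (g : ℝ → ℝ) (U : ℝ) :
    smoothAvg K U g = (resc K U ⋆[ContinuousLinearMap.mul ℝ ℝ] g) := by
  funext x
  calc smoothAvg K U g x = ∫ s, resc K U (x - s) * g s := rfl
    _ = ∫ u, resc K U (x - (x - u)) * g (x - u) :=
        (integral_sub_left_eq_self (fun s => resc K U (x - s) * g s) volume x).symm
    _ = ∫ u, resc K U u * g (x - u) := by simp [sub_sub_cancel]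
    _ = (resc K U ⋆[ContinuousLinearMap.mul ℝ ℝ] g) x := by
        rw [convolution_def]; simp [ContinuousLinearMap.mul_apply']

lemma resc_lip {K : ℝ → ℝ} {M : ℝ} (hKlip : ∀ a b, |K a - K b| ≤ M * |a - b|)
    {U : ℝ} (hU : 0 < U) (a b : ℝ) :
    |resc K U a - resc K U b| ≤ M / U ^ 2 * |a - b| := by
  have h : resc K U a - resc K U b = (1/U) * (K (a/U) - K (b/U)) := by
    simp only [resc]; ring
  calc |resc K U a - resc K U b| = (1/U) * |K (a/U) - K (b/U)| := by
        rw [h, abs_mul, abs_of_pos (by positivity : (0:ℝ) < 1/U)]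
    _ ≤ (1/U) * (M * |a/U - b/U|) := by
        exact mul_le_mul_of_nonneg_left (hKlip _ _) (by positivity)
    _ = M / U ^ 2 * |a - b| := by
        rw [div_sub_div_same, abs_div, abs_of_pos hU]; ring

lemma q_pointwise {K : ℝ → ℝ} (hKc : Continuous K) (hKpos : ∀ t, 0 ≤ K t)
    (hKint : ∫ t, K t = 1) {R : ℝ} (hR : 0 ≤ R) (hKR : ∀ y ∈ tsupport K, |y| ≤ R)
    {M : ℝ} (hM : 0 ≤ M) (hKlip : ∀ a b, |K a - K b| ≤ M * |a - b|)
    {S T : ℝ} (hS : 0 < S) (hT : 0 < T) (x : ℝ) :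
    |(resc K T ⋆[ContinuousLinearMap.mul ℝ ℝ] resc K S) x - resc K T x| ≤ M * S * R / T ^ 2 := by
  set φ := resc K T with hφ
  set ψ := resc K S with hψ
  have hqdef : (φ ⋆[ContinuousLinearMap.mul ℝ ℝ] ψ) x = ∫ u, φ u * ψ (x - u) := by
    rw [convolution_def]; simp [ContinuousLinearMap.mul_apply']
  have e1 : (φ ⋆[ContinuousLinearMap.mul ℝ ℝ] ψ) x = ∫ v, φ (x - v) * ψ v := by
    calc (φ ⋆[ContinuousLinearMap.mul ℝ ℝ] ψ) x = ∫ u, φ u * ψ (x - u) := hqdef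
      _ = ∫ u, φ (x - (x - u)) * ψ (x - u) := by simp [sub_sub_cancel]
      _ = ∫ v, φ (x - v) * ψ v := integral_sub_left_eq_self (fun v => φ (x - v) * ψ v) volume x
  have hψi : Integrable ψ volume :=
    (resc_continuous hKc S).integrable_of_hasCompactSupport (resc_hasCompactSupport hKR hS)
  have e2 : φ x = ∫ v, φ x * ψ v := by
    rw [integral_const_mul, hψ, resc_integral hKint hS, mul_one]
  have i1 : Integrable (fun v => φ (x - v) * ψ v) volume := by
    apply Continuous.integrable_of_hasCompactSupport
    · exact ((resc_continuous hKc T).comp (continuous_const.sub continuous_id)).mul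
        (resc_continuous hKc S)
    · exact (resc_hasCompactSupport hKR hS).mono
        (fun v hv => mem_support.2 (right_ne_zero_of_mul (mem_support.1 hv)))
  have i2 : Integrable (fun v => φ x * ψ v) volume := hψi.const_mul _
  have e3 : (φ ⋆[ContinuousLinearMap.mul ℝ ℝ] ψ) x - φ x = ∫ v, (φ (x - v) - φ x) * ψ v := by
    conv_lhs => rw [e1, e2]
    rw [← integral_sub i1 i2]; congr 1; ext v; ring
  have i4 : Integrable (fun v => (φ (x - v) - φ x) * ψ v) volume := by
    have := i1.sub i2
    simpa [sub_mul, Pi.sub_def] using this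
  rw [e3, ← Real.norm_eq_abs]
  calc ‖∫ v, (φ (x - v) - φ x) * ψ v‖ ≤ ∫ v, ‖(φ (x - v) - φ x) * ψ v‖ :=
        norm_integral_le_integral_norm _
    _ ≤ ∫ v, (M * S * R / T ^ 2) * ψ v := by
        refine integral_mono i4.norm (hψi.const_mul _) (fun v => ?_)
        rw [norm_mul, Real.norm_of_nonneg (resc_nonneg hKpos hS v)]
        by_cases hv : resc K S v = 0
        · rw [hv, mul_zero]
          exact mul_nonneg (by positivity) (resc_nonneg hKpos hS v)
        · have hvR : |v| ≤ S * R := resc_abs_le hKR hS hv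
          have h1 : ‖φ (x - v) - φ x‖ ≤ M / T ^ 2 * (S * R) := by
            refine le_trans ?_ (mul_le_mul_of_nonneg_left hvR (by positivity))
            have := resc_lip hKlip hT (x - v) x
            simpa [Real.norm_eq_abs, sub_sub_cancel_left, abs_neg] using this
          refine le_trans (mul_le_mul_of_nonneg_right h1 (resc_nonneg hKpos hS v)) ?_
          apply le_of_eq; ring
    _ = M * S * R / T ^ 2 := by rw [integral_const_mul, hψ, resc_integral hKint hS, mul_one]

lemma q_L1 {K : ℝ → ℝ} (hKc : Continuous K) (hKpos : ∀ t, 0 ≤ K t)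
    (hKint : ∫ t, K t = 1) {R : ℝ} (hR : 0 ≤ R) (hKR : ∀ y ∈ tsupport K, |y| ≤ R)
    {M : ℝ} (hM : 0 ≤ M) (hKlip : ∀ a b, |K a - K b| ≤ M * |a - b|)
    {S T : ℝ} (hS : 0 < S) (hST : S ≤ T) :
    ∫ x, |resc K T x - (resc K T ⋆[ContinuousLinearMap.mul ℝ ℝ] resc K S) x|
      ≤ 4 * M * R ^ 2 * (S / T) := by
  have hT : 0 < T := lt_of_lt_of_le hS hST
  set φ := resc K T with hφ
  set ψ := resc K S with hψ
  set q := φ ⋆[ContinuousLinearMap.mul ℝ ℝ] ψ with hq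
  have hvanish : ∀ x : ℝ, x ∉ Icc (-(2*T*R)) (2*T*R) → |φ x - q x| = 0 := by
    intro x hx
    have hxabs : ¬ |x| ≤ 2*T*R := fun h => hx (mem_Icc.mpr (abs_le.mp h))
    have hφ0 : φ x = 0 := by
      by_contra h
      exact hxabs (by nlinarith [resc_abs_le hKR hT h])
    have hq0 : q x = 0 := by
      by_contra h
      have hmem := support_convolution_subset (ContinuousLinearMap.mul ℝ ℝ)
        (mem_support.2 h)
      rw [Set.mem_add] at hmem
      obtain ⟨a, ha, b, hb, hab⟩ := hmem
      have h1 : |a| ≤ T * R := resc_abs_le hKR hT (mem_support.1 ha)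
      have h2 : |b| ≤ S * R := resc_abs_le hKR hS (mem_support.1 hb)
      refine hxabs ?_
      rw [← hab]
      calc |a + b| ≤ |a| + |b| := abs_add_le a b
        _ ≤ T * R + S * R := add_le_add h1 h2
        _ ≤ 2 * T * R := by nlinarith
    rw [hφ0, hq0, sub_zero, abs_zero]
  have hpt : ∀ x, |φ x - q x| ≤ M * S * R / T ^ 2 := fun x => by
    rw [abs_sub_comm]
    exact q_pointwise hKc hKpos hKint hR hKR hM hKlip hS hT x
  rw [← setIntegral_eq_integral_of_forall_compl_eq_zero hvanish]
  have hvol : volume (Icc (-(2*T*R)) (2*T*R)) < ⊤ := measure_Icc_lt_top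
  have hqcont : Continuous q :=
    HasCompactSupport.continuous_convolution_left _ (resc_hasCompactSupport hKR hT)
      (resc_continuous hKc T)
      ((resc_continuous hKc S).integrable_of_hasCompactSupport
        (resc_hasCompactSupport hKR hS) : Integrable ψ volume).locallyIntegrable
  have hbd := norm_setIntegral_le_of_norm_le_const (f := fun x => |φ x - q x|)
    (C := M * S * R / T ^ 2) hvol
    (fun x _ => by rw [Real.norm_eq_abs, abs_abs]; exact hpt x)
  have hbd' : (∫ x in Icc (-(2*T*R)) (2*T*R), |φ x - q x|)
      ≤ M * S * R / T ^ 2 * (volume (Icc (-(2*T*R)) (2*T*R))).toReal :=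
    le_trans (le_abs_self _) hbd
  refine le_trans hbd' ?_
  rw [Real.volume_Icc, ENNReal.toReal_ofReal (by nlinarith : (0:ℝ) ≤ 2*T*R - -(2*T*R))]
  have hT0 : T ≠ 0 := hT.ne'
  apply le_of_eq
  field_simp
  ring

lemma fubini_key {K g : ℝ → ℝ} (hKc : Continuous K) (hKpos : ∀ t, 0 ≤ K t)
    {R : ℝ} (hKR : ∀ y ∈ tsupport K, |y| ≤ R)
    (hg : Measurable g) {B : ℝ} (hB : ∀ t, |g t| ≤ B)
    {S T : ℝ} (hS : 0 < S) (hT : 0 < T) (t : ℝ) :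
    ∫ s, (resc K T ⋆[ContinuousLinearMap.mul ℝ ℝ] resc K S) (t - s) * g s
      = ∫ u, resc K T u * smoothAvg K S g (t - u) := by
  set φ := resc K T with hφ
  set ψ := resc K S with hψ
  have hφi : Integrable φ volume :=
    (resc_continuous hKc T).integrable_of_hasCompactSupport (resc_hasCompactSupport hKR hT)
  have hψi : Integrable ψ volume :=
    (resc_continuous hKc S).integrable_of_hasCompactSupport (resc_hasCompactSupport hKR hS)
  have hF : Integrable (uncurry fun u s => φ u * (ψ (t - u - s) * g s))
      (volume.prod volume) := by
    have base : Integrable (fun p : ℝ × ℝ => φ p.2 * ψ (p.1 - p.2)) (volume.prod volume) := by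
      have := hφi.convolution_integrand (ContinuousLinearMap.mul ℝ ℝ) hψi
      simpa [ContinuousLinearMap.mul_apply'] using this
    have hm : MeasurePreserving (fun p : ℝ × ℝ => ((t - p.2 : ℝ), p.1))
        (volume.prod volume) (volume.prod volume) := by
      have h1 : MeasurePreserving (Prod.map (fun x : ℝ => t - x) (id : ℝ → ℝ))
          (volume.prod volume) (volume.prod volume) :=
        (Measure.measurePreserving_sub_left volume t).prod (MeasurePreserving.id volume)
      exact h1.comp Measure.measurePreserving_swap
    have hcomp : Integrable ((fun p : ℝ × ℝ => φ p.2 * ψ (p.1 - p.2)) ∘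
        (fun p : ℝ × ℝ => ((t - p.2 : ℝ), p.1))) (volume.prod volume) :=
      (hm.integrable_comp base.aestronglyMeasurable).2 base
    have hdom : Integrable (fun p : ℝ × ℝ => B * (φ p.1 * ψ (t - p.1 - p.2)))
        (volume.prod volume) := by
      refine Integrable.const_mul ?_ B
      have : ((fun p : ℝ × ℝ => φ p.2 * ψ (p.1 - p.2)) ∘
          (fun p : ℝ × ℝ => ((t - p.2 : ℝ), p.1)))
          = fun p : ℝ × ℝ => φ p.1 * ψ (t - p.1 - p.2) := by
        funext p
        simp only [Function.comp_apply]
        rw [sub_right_comm]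
      rwa [this] at hcomp
    refine hdom.mono' ?_ (ae_of_all _ fun p => ?_)
    · exact (((resc_continuous hKc T).measurable.comp measurable_fst).mul
        (((resc_continuous hKc S).measurable.comp
          ((measurable_const.sub measurable_fst).sub measurable_snd)).mul
          (hg.comp measurable_snd))).aestronglyMeasurable
    · have h1 := resc_nonneg hKpos hT p.1
      have h2 := resc_nonneg hKpos hS (t - p.1 - p.2)
      have h3 := hB p.2
      show ‖φ p.1 * (ψ (t - p.1 - p.2) * g p.2)‖ ≤ B * (φ p.1 * ψ (t - p.1 - p.2))
      rw [norm_mul, norm_mul, Real.norm_of_nonneg h1, Real.norm_of_nonneg h2,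
        Real.norm_eq_abs]
      calc φ p.1 * (ψ (t - p.1 - p.2) * |g p.2|)
          ≤ φ p.1 * (ψ (t - p.1 - p.2) * B) := by
            exact mul_le_mul_of_nonneg_left (mul_le_mul_of_nonneg_left h3 h2) h1
        _ = B * (φ p.1 * ψ (t - p.1 - p.2)) := by ring
  calc ∫ s, (φ ⋆[ContinuousLinearMap.mul ℝ ℝ] ψ) (t - s) * g s
      = ∫ s, ∫ u, φ u * (ψ (t - u - s) * g s) := by
        congr 1; funext s
        rw [convolution_def]
        simp only [ContinuousLinearMap.mul_apply']
        rw [← integral_mul_const]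
        congr 1; funext u
        rw [mul_assoc, sub_right_comm]
    _ = ∫ u, ∫ s, φ u * (ψ (t - u - s) * g s) := (integral_integral_swap hF).symm
    _ = ∫ u, φ u * smoothAvg K S g (t - u) := by
        congr 1; funext u
        rw [integral_const_mul]
        rfl


/-- Estimates (1.20)–(1.21) of the paper: for a smooth, compactly supported, nonnegative
kernel `K` with `∫ K = 1`, there is `C > 0` such that for every bounded measurable `g`,
every interval `I ⊆ ℝ` and all `0 < S ≤ T`,
`inf_I (K_T * g) ≥ inf_{I − T·supp K} (K_S * g) − C (S/T) ‖g‖_∞` and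
`sup_I (K_T * g) ≤ sup_{I − T·supp K} (K_S * g) + C (S/T) ‖g‖_∞`. -/
theorem statement1 (K : ℝ → ℝ) (hK : ContDiff ℝ (⊤ : ℕ∞) K) (hKsupp : HasCompactSupport K)
    (hKpos : ∀ t, 0 ≤ K t) (hKint : ∫ t, K t = 1) :
    ∃ C > 0, ∀ g : ℝ → ℝ, Measurable g → ∀ B : ℝ, (∀ t, |g t| ≤ B) →
      ∀ I : Set ℝ, I.OrdConnected → ∀ S T : ℝ, 0 < S → S ≤ T →
      (∀ t ∈ I,
        sInf (smoothAvg K S g '' shiftedSet I T K) - C * (S / T) * B ≤ smoothAvg K T g t) ∧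
      (∀ t ∈ I,
        smoothAvg K T g t ≤ sSup (smoothAvg K S g '' shiftedSet I T K) + C * (S / T) * B) := by
  obtain ⟨r, hr⟩ := hKsupp.isBounded.subset_closedBall (0:ℝ)
  set R : ℝ := max r 1 with hRdef
  have hR1 : (1:ℝ) ≤ R := le_max_right _ _
  have hR0 : (0:ℝ) ≤ R := by linarith
  have hKR : ∀ y ∈ tsupport K, |y| ≤ R := by
    intro y hy
    have h := hr hy
    rw [Metric.mem_closedBall, Real.dist_eq, sub_zero] at h
    exact le_trans h (le_max_left _ _)
  obtain ⟨M0, hM0⟩ := (hKsupp.deriv).exists_bound_of_continuous (hK.continuous_deriv (by simp))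
  set M : ℝ := max M0 0 with hMdef
  have hM : 0 ≤ M := le_max_right _ _
  have hKlip : ∀ a b, |K a - K b| ≤ M * |a - b| := by
    intro a b
    have hlw : LipschitzWith ⟨M, hM⟩ K :=
      lipschitzWith_of_nnnorm_deriv_le (hK.differentiable (by simp)) (fun x => by
        exact NNReal.coe_le_coe.1 (by rw [coe_nnnorm]; exact le_trans (hM0 x) (le_max_left _ _)))
    have h := hlw.dist_le_mul a b
    rwa [Real.dist_eq, Real.dist_eq] at h
  refine ⟨4 * M * R ^ 2 + 1, by positivity, ?_⟩
  intro g hg B hB I _ S T hS hST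
  have hT : 0 < T := lt_of_lt_of_le hS hST
  have hB0 : 0 ≤ B := le_trans (abs_nonneg _) (hB 0)
  have hbound : ∀ x, |smoothAvg K S g x| ≤ B :=
    fun x => smoothAvg_abs_le hK.continuous hKpos hKint hKR hg hB hS x
  have hgloc : LocallyIntegrable g volume :=
    (memLp_top_of_bound hg.aestronglyMeasurable B (ae_of_all _ fun x => by
      simpa [Real.norm_eq_abs] using hB x)).locallyIntegrable le_top
  have haScont : Continuous (smoothAvg K S g) := by
    rw [smoothAvg_eq_convolution]
    exact HasCompactSupport.continuous_convolution_left _ (resc_hasCompactSupport hKR hS)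
      (resc_continuous hK.continuous S) hgloc
  set q := resc K T ⋆[ContinuousLinearMap.mul ℝ ℝ] resc K S with hqdef
  have hφi : Integrable (resc K T) volume :=
    (resc_continuous hK.continuous T).integrable_of_hasCompactSupport
      (resc_hasCompactSupport hKR hT)
  have hψi : Integrable (resc K S) volume :=
    (resc_continuous hK.continuous S).integrable_of_hasCompactSupport
      (resc_hasCompactSupport hKR hS)
  have hqcont : Continuous q := HasCompactSupport.continuous_convolution_left _
      (resc_hasCompactSupport hKR hT) (resc_continuous hK.continuous T) hψi.locallyIntegrable
  have hqHCS : HasCompactSupport q :=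
    HasCompactSupport.convolution _ (resc_hasCompactSupport hKR hT)
      (resc_hasCompactSupport hKR hS)
  have hqi : Integrable q volume := hqcont.integrable_of_hasCompactSupport hqHCS
  have herr : ∀ t : ℝ, |smoothAvg K T g t - ∫ u, resc K T u * smoothAvg K S g (t - u)|
      ≤ 4 * M * R ^ 2 * (S / T) * B := by
    intro t
    rw [← fubini_key hK.continuous hKpos hKR hg hB hS hT t]
    have i1 := integrand_integrable (resc_continuous hK.continuous T)
      (resc_hasCompactSupport hKR hT) hg hB t
    have i2 := integrand_integrable hqcont hqHCS hg hB t
    have e : smoothAvg K T g t - ∫ s, q (t - s) * g s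
        = ∫ s, (resc K T (t - s) - q (t - s)) * g s := by
      rw [show smoothAvg K T g t = ∫ s, resc K T (t - s) * g s from rfl,
        ← integral_sub i1 i2]
      congr 1; funext s; ring
    rw [e]
    have idif : Integrable (fun s => (resc K T (t - s) - q (t - s)) * g s) volume := by
      have h := i1.sub i2; simpa [sub_mul, Pi.sub_def] using h
    have idif2 : Integrable (fun s => |resc K T (t - s) - q (t - s)| * B) volume := by
      have h0 : Integrable (fun s => resc K T (t - s) - q (t - s)) volume := by
        have h := (hφi.sub hqi).comp_sub_left t
        simpa using h
      exact h0.abs.mul_const B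
    calc |∫ s, (resc K T (t - s) - q (t - s)) * g s|
        ≤ ∫ s, ‖(resc K T (t - s) - q (t - s)) * g s‖ := by
          rw [← Real.norm_eq_abs]; exact norm_integral_le_integral_norm _
      _ ≤ ∫ s, |resc K T (t - s) - q (t - s)| * B := by
          refine integral_mono idif.norm idif2 (fun s => ?_)
          rw [norm_mul, Real.norm_eq_abs, Real.norm_eq_abs]
          exact mul_le_mul_of_nonneg_left (hB s) (abs_nonneg _)
      _ = (∫ x, |resc K T x - q x|) * B := by
          rw [integral_mul_const]
          exact congrArg (· * B)
            (integral_sub_left_eq_self (fun x => |resc K T x - q x|) volume t)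
      _ ≤ 4 * M * R ^ 2 * (S / T) * B :=
          mul_le_mul_of_nonneg_right (q_L1 hK.continuous hKpos hKint hR0 hKR hM hKlip hS hST) hB0
  have main : ∀ t ∈ I,
      (sInf (smoothAvg K S g '' shiftedSet I T K) - (4 * M * R ^ 2 + 1) * (S / T) * B
        ≤ smoothAvg K T g t) ∧
      (smoothAvg K T g t
        ≤ sSup (smoothAvg K S g '' shiftedSet I T K) + (4 * M * R ^ 2 + 1) * (S / T) * B) := by
    intro t ht
    have himg : ∀ u : ℝ, resc K T u ≠ 0 →
        smoothAvg K S g (t - u) ∈ smoothAvg K S g '' shiftedSet I T K := by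
      intro u hu
      refine ⟨t - u, ⟨t, ht, u / T, resc_mem_tsupport hu, ?_⟩, rfl⟩
      rw [mul_comm, div_mul_cancel₀ u hT.ne']
    have hBddB : BddBelow (smoothAvg K S g '' shiftedSet I T K) := by
      refine ⟨-B, fun y hy => ?_⟩
      obtain ⟨x, -, rfl⟩ := hy
      exact (abs_le.1 (hbound x)).1
    have hBddA : BddAbove (smoothAvg K S g '' shiftedSet I T K) := by
      refine ⟨B, fun y hy => ?_⟩
      obtain ⟨x, -, rfl⟩ := hy
      exact (abs_le.1 (hbound x)).2
    have hmid_int : Integrable (fun u => resc K T u * smoothAvg K S g (t - u)) volume := by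
      apply Continuous.integrable_of_hasCompactSupport
      · exact (resc_continuous hK.continuous T).mul
          (haScont.comp (continuous_const.sub continuous_id))
      · exact (resc_hasCompactSupport hKR hT).mono
          (fun u hu => mem_support.2 (left_ne_zero_of_mul (mem_support.1 hu)))
    have hint1 : ∫ u, resc K T u = 1 := resc_integral hKint hT
    have hlow : sInf (smoothAvg K S g '' shiftedSet I T K)
        ≤ ∫ u, resc K T u * smoothAvg K S g (t - u) := by
      have h0 : ∫ u, resc K T u * sInf (smoothAvg K S g '' shiftedSet I T K)
          = sInf (smoothAvg K S g '' shiftedSet I T K) := by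
        rw [integral_mul_const, hint1, one_mul]
      rw [← h0]
      refine integral_mono (hφi.mul_const _) hmid_int (fun u => ?_)
      by_cases hu : resc K T u = 0
      · simp [hu]
      · exact mul_le_mul_of_nonneg_left (csInf_le hBddB (himg u hu)) (resc_nonneg hKpos hT u)
    have hhigh : (∫ u, resc K T u * smoothAvg K S g (t - u))
        ≤ sSup (smoothAvg K S g '' shiftedSet I T K) := by
      have h0 : ∫ u, resc K T u * sSup (smoothAvg K S g '' shiftedSet I T K)
          = sSup (smoothAvg K S g '' shiftedSet I T K) := by
        rw [integral_mul_const, hint1, one_mul]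
      rw [← h0]
      refine integral_mono hmid_int (hφi.mul_const _) (fun u => ?_)
      by_cases hu : resc K T u = 0
      · simp [hu]
      · exact mul_le_mul_of_nonneg_left (le_csSup hBddA (himg u hu)) (resc_nonneg hKpos hT u)
    have habs := abs_le.1 (herr t)
    have hfinal : 4 * M * R ^ 2 * (S / T) * B ≤ (4 * M * R ^ 2 + 1) * (S / T) * B := by
      have h1 : 0 ≤ (S / T) * B := mul_nonneg (by positivity) hB0
      nlinarith
    constructor
    · linarith [habs.1, hlow]
    · linarith [habs.2, hhigh]
  exact ⟨fun t ht => (main t ht).1, fun t ht => (main t ht).2⟩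
end

section
/- Let (M, dist) be a metric space. Suppose that for each T ∈ [1, ∞) and each μ ∈ M a nonempty compact set Q_T(μ) ⊆ ℝ is given, and for each μ ∈ M a nonempty compact set Q_∞(μ) ⊆ ℝ is given, subject to: (i) Q_∞(μ) ⊆ Q_T(μ) for all T ≥ 1 and all μ; (ii) there is C ≥ 0 with Q_T(μ) ⊆ Q_S(μ) + [−C·S/T, C·S/T] for all 1 ≤ S ≤ T and all μ; (iii) for every μ₀ ∈ M, T ≥ 1, ε > 0 there is δ > 0 such that dist(μ, μ₀) < δ implies Q_T(μ) ⊆ Q_T(μ₀) + [−ε, ε]; (iv) for every μ₀ ∈ M and ε > 0 there is T₀ ≥ 1 with Q_{T₀}(μ₀) ⊆ Q_∞(μ₀) + [−ε, ε]. Define 𝒬_T = {(μ, E) : μ ∈ M, E ∈ Q_T(μ)} for T ∈ [1, ∞]. Then: (1) 𝒬_∞ is closed in M × ℝ; (2) if M is compact, then for every open set U ⊇ 𝒬_∞ there exists T₁ ∈ [1, ∞) such that 𝒬_T ⊆ U for all T ≥ T₁. -/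
/-- Lemma 2.4 of the paper, in abstract form. Given compact nonempty sets
`Q T μ ⊆ ℝ` (for `T ≥ 1`) and `Qinf μ ⊆ ℝ` satisfying the nesting property
`Qinf μ ⊆ Q T μ`, the two-scale comparison `Q T μ ⊆ Q S μ + [−C S/T, C S/T]`,
continuity in `μ`, and approximation of `Qinf μ₀` by some `Q T₀ μ₀`, one has:
(1) `𝒬_∞ = {(μ, E) : E ∈ Qinf μ}` is closed; (2) if `M` is compact, then for every
open `U ⊇ 𝒬_∞` there is `T₁ ≥ 1` with `𝒬_T ⊆ U` for all `T ≥ T₁`. -/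
theorem statement11 {M : Type*} [MetricSpace M]
    (Q : ℝ → M → Set ℝ) (Qinf : M → Set ℝ)
    (hQne : ∀ T : ℝ, 1 ≤ T → ∀ μ : M, (Q T μ).Nonempty)
    (hQcp : ∀ T : ℝ, 1 ≤ T → ∀ μ : M, IsCompact (Q T μ))
    (hQinfne : ∀ μ : M, (Qinf μ).Nonempty)
    (hQinfcp : ∀ μ : M, IsCompact (Qinf μ))
    (hnest : ∀ T : ℝ, 1 ≤ T → ∀ μ : M, Qinf μ ⊆ Q T μ)
    (C : ℝ) (hC : 0 ≤ C)
    (hcomp : ∀ S T : ℝ, 1 ≤ S → S ≤ T → ∀ μ : M, ∀ E ∈ Q T μ,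
      ∃ E' ∈ Q S μ, |E - E'| ≤ C * S / T)
    (hcont : ∀ μ₀ : M, ∀ T : ℝ, 1 ≤ T → ∀ ε > (0 : ℝ), ∃ δ > (0 : ℝ), ∀ μ : M,
      dist μ μ₀ < δ → ∀ E ∈ Q T μ, ∃ E' ∈ Q T μ₀, |E - E'| ≤ ε)
    (happrox : ∀ μ₀ : M, ∀ ε > (0 : ℝ), ∃ T₀ : ℝ, 1 ≤ T₀ ∧
      ∀ E ∈ Q T₀ μ₀, ∃ E' ∈ Qinf μ₀, |E - E'| ≤ ε) :
    IsClosed {p : M × ℝ | p.2 ∈ Qinf p.1} ∧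
    (CompactSpace M → ∀ U : Set (M × ℝ), IsOpen U →
      {p : M × ℝ | p.2 ∈ Qinf p.1} ⊆ U →
      ∃ T₁ : ℝ, 1 ≤ T₁ ∧ ∀ T : ℝ, T₁ ≤ T → {p : M × ℝ | p.2 ∈ Q T p.1} ⊆ U) := by
  -- Key step: combine `hcont` and `happrox`.
  have key : ∀ μ₀ : M, ∀ ε > (0 : ℝ), ∃ δ > (0 : ℝ), ∃ T₀ : ℝ, 1 ≤ T₀ ∧
      ∀ μ : M, dist μ μ₀ < δ → ∀ E ∈ Q T₀ μ, ∃ E'' ∈ Qinf μ₀, |E - E''| ≤ ε := by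
    intro μ₀ ε hε
    obtain ⟨T₀, hT₀, happ⟩ := happrox μ₀ (ε / 2) (by linarith)
    obtain ⟨δ, hδ, hcnt⟩ := hcont μ₀ T₀ hT₀ (ε / 2) (by linarith)
    refine ⟨δ, hδ, T₀, hT₀, fun μ hμ E hE => ?_⟩
    obtain ⟨E', hE', h1⟩ := hcnt μ hμ E hE
    obtain ⟨E'', hE'', h2⟩ := happ E' hE'
    refine ⟨E'', hE'', ?_⟩
    calc |E - E''| ≤ |E - E'| + |E' - E''| := abs_sub_le _ _ _
      _ ≤ ε := by linarith
  constructor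
  · -- closedness: show the complement is open
    rw [← isOpen_compl_iff, Metric.isOpen_iff]
    rintro ⟨μ₀, E₀⟩ hp
    simp only [Set.mem_compl_iff, Set.mem_setOf_eq] at hp
    have hclosed : IsClosed (Qinf μ₀) := (hQinfcp μ₀).isClosed
    have hd : 0 < Metric.infDist E₀ (Qinf μ₀) :=
      (hclosed.notMem_iff_infDist_pos (hQinfne μ₀)).mp hp
    set ε : ℝ := Metric.infDist E₀ (Qinf μ₀) / 3 with hεdef
    have hε : 0 < ε := by positivity
    obtain ⟨δ, hδ, T₀, hT₀, hk⟩ := key μ₀ ε hε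
    refine ⟨min δ ε, lt_min hδ hε, ?_⟩
    rintro ⟨μ, E⟩ hq
    simp only [Set.mem_compl_iff, Set.mem_setOf_eq]
    intro hE
    have hd1 : dist μ μ₀ < min δ ε := lt_of_le_of_lt (le_trans (le_max_left _ _)
      (le_of_eq (Prod.dist_eq (x := (μ, E)) (y := (μ₀, E₀))).symm)) hq
    have hd2 : dist E E₀ < min δ ε := lt_of_le_of_lt (le_trans (le_max_right _ _)
      (le_of_eq (Prod.dist_eq (x := (μ, E)) (y := (μ₀, E₀))).symm)) hq
    obtain ⟨E'', hE'', hEE⟩ := hk μ (lt_of_lt_of_le hd1 (min_le_left _ _))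
      E (hnest T₀ hT₀ μ hE)
    have hinf : Metric.infDist E₀ (Qinf μ₀) ≤ dist E₀ E'' := Metric.infDist_le_dist_of_mem hE''
    have hd2' : |E - E₀| < ε := lt_of_lt_of_le hd2 (min_le_right _ _)
    rw [Real.dist_eq] at hinf
    have habs : |E₀ - E''| ≤ |E₀ - E| + |E - E''| := abs_sub_le _ _ _
    rw [abs_sub_comm E₀ E] at habs
    have h3 : Metric.infDist E₀ (Qinf μ₀) < 2 * ε := by linarith
    rw [hεdef] at h3
    linarith
  · -- compact case
    intro hM U hU hUsub
    -- local statement around each μ₀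
    have loc : ∀ μ₀ : M, ∃ δ > (0 : ℝ), ∃ T₁ : ℝ, 1 ≤ T₁ ∧
        ∀ T : ℝ, T₁ ≤ T → ∀ μ : M, dist μ μ₀ < δ → ∀ E ∈ Q T μ, (μ, E) ∈ U := by
      intro μ₀
      have hcpt : IsCompact ({μ₀} ×ˢ Qinf μ₀) := isCompact_singleton.prod (hQinfcp μ₀)
      have hsub : ({μ₀} ×ˢ Qinf μ₀ : Set (M × ℝ)) ⊆ U := by
        rintro ⟨μ, E⟩ ⟨hμ, hE⟩
        rcases hμ with rfl
        exact hUsub hE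
      obtain ⟨δ₀, hδ₀, hth⟩ := hcpt.exists_thickening_subset_open hU hsub
      obtain ⟨δ, hδ, T₀, hT₀, hk⟩ := key μ₀ (δ₀ / 4) (by linarith)
      refine ⟨min δ (δ₀ / 2), lt_min hδ (by linarith), max T₀ (4 * C * T₀ / δ₀),
        le_trans hT₀ (le_max_left _ _), fun T hT μ hμ E hE => ?_⟩
      have hTT₀ : T₀ ≤ T := le_trans (le_max_left _ _) hT
      have hTpos : 0 < T := lt_of_lt_of_le (by linarith) hTT₀
      obtain ⟨E₁, hE₁, h1⟩ := hcomp T₀ T hT₀ hTT₀ μ E hE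
      have hμδ : dist μ μ₀ < δ := lt_of_lt_of_le hμ (min_le_left _ _)
      obtain ⟨E'', hE'', h2⟩ := hk μ hμδ E₁ hE₁
      have herr : C * T₀ / T ≤ δ₀ / 4 := by
        rw [div_le_iff₀ hTpos]
        have h4 : 4 * C * T₀ / δ₀ ≤ T := le_trans (le_max_right _ _) hT
        rw [div_le_iff₀ hδ₀] at h4
        nlinarith
      apply hth
      rw [Metric.mem_thickening_iff]
      refine ⟨(μ₀, E''), ⟨rfl, hE''⟩, ?_⟩
      rw [Prod.dist_eq]
      have hμδ₀ : dist μ μ₀ < δ₀ / 2 := lt_of_lt_of_le hμ (min_le_right _ _)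
      have hEd : dist E E'' < δ₀ := by
        rw [Real.dist_eq]
        calc |E - E''| ≤ |E - E₁| + |E₁ - E''| := abs_sub_le _ _ _
          _ ≤ δ₀ / 4 + δ₀ / 4 := by linarith
          _ < δ₀ := by linarith
      exact max_lt (by linarith) hEd
    choose δ hδ Tloc hTloc hloc using loc
    -- cover M by the balls `ball μ₀ (δ μ₀)`
    obtain ⟨t, ht⟩ := isCompact_univ.elim_finite_subcover
      (fun μ₀ : M => Metric.ball μ₀ (δ μ₀)) (fun μ₀ => Metric.isOpen_ball)
      (fun μ _ => Set.mem_iUnion.mpr ⟨μ, Metric.mem_ball_self (hδ μ)⟩)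
    obtain ⟨B, hB'⟩ := (t.image Tloc).exists_le
    have hB : ∀ μ₀ ∈ t, Tloc μ₀ ≤ B := fun μ₀ hμ₀ =>
      hB' _ (Finset.mem_image_of_mem Tloc hμ₀)
    refine ⟨max 1 B, le_max_left _ _, fun T hT => ?_⟩
    rintro ⟨μ, E⟩ hE
    obtain ⟨μ₀, hμ₀t, hμball⟩ := Set.mem_iUnion₂.mp (ht (Set.mem_univ μ))
    exact hloc μ₀ T (le_trans (le_trans (hB μ₀ hμ₀t) (le_max_right 1 B)) hT)
      μ hμball E hE
end

section
/- Let g : [−1, 1] → ℝ be C². Then there exists C > 0 such that for all r ∈ (0, 1]: | ∫_{−r}^{r} x²·g(x)·(r² − x²)^{−1/2} dx − (π/2)·g(0)·r² | ≤ C·r⁴. -/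
open MeasureTheory

/-!
The substitution `x = r sin θ` removes the singularity: the integral becomes
`r² ∫_{-π/2}^{π/2} sin² θ · g (r sin θ) dθ`. Writing `g x = g 0 + g'(0) x + O(x²)`, the
constant term contributes `(π/2) g(0) r²`, the linear term vanishes since `sin³` is odd, and
the remainder is `O(r²)` uniformly in `θ`, giving the `O(r⁴)` error.
-/

open Real Set
open scoped NNReal

theorem abs_sub_sub_mul_le_of_lipschitzOnWith {f f' : ℝ → ℝ} {s : Set ℝ} {K : ℝ≥0}
    (hs : Convex ℝ s) (hf : ∀ x ∈ s, HasDerivWithinAt f (f' x) s x)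
    (hf' : LipschitzOnWith K f' s) {a x : ℝ} (ha : a ∈ s) (hx : x ∈ s) :
    |f x - f a - f' a * (x - a)| ≤ K * (x - a) ^ 2 := by
  have hseg : uIcc a x ⊆ s := segment_eq_uIcc a x ▸ hs.segment_subset ha hx
  have hderiv : ∀ y ∈ uIcc a x,
      HasDerivWithinAt (fun z => f z - f' a * z) (f' y - f' a) (uIcc a x) y := fun y hy =>
    ((hf y (hseg hy)).mono hseg).sub
      (by simpa using ((hasDerivAt_id y).const_mul (f' a)).hasDerivWithinAt)
  have hbound : ∀ y ∈ uIcc a x, ‖f' y - f' a‖ ≤ K * |x - a| := fun y hy =>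
    (hf'.dist_le_mul y (hseg hy) a ha).trans
      (mul_le_mul_of_nonneg_left (abs_sub_left_of_mem_uIcc hy) K.2)
  calc |f x - f a - f' a * (x - a)| = ‖(f x - f' a * x) - (f a - f' a * a)‖ := by
        rw [Real.norm_eq_abs]; ring_nf
    _ ≤ K * |x - a| * ‖x - a‖ :=
        (convex_uIcc a x).norm_image_sub_le_of_norm_hasDerivWithin_le hderiv hbound
          left_mem_uIcc right_mem_uIcc
    _ = K * (x - a) ^ 2 := by rw [Real.norm_eq_abs, mul_assoc, abs_mul_abs_self, sq]

theorem ContDiffOn.exists_abs_sub_sub_mul_le {g : ℝ → ℝ} {a b c : ℝ}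
    (hg : ContDiffOn ℝ 2 g (Icc a b)) (hab : a < b) (hc : c ∈ Icc a b) :
    ∃ K M : ℝ, 0 ≤ M ∧
      ∀ x ∈ Icc a b, |g x - g c - K * (x - c)| ≤ M * (x - c) ^ 2 := by
  obtain ⟨L, hL⟩ := (hg.derivWithin (m := 1) (uniqueDiffOn_Icc hab) (by norm_num)
    ).exists_lipschitzOnWith one_ne_zero (convex_Icc a b) isCompact_Icc
  exact ⟨_, L, L.2, fun x hx => abs_sub_sub_mul_le_of_lipschitzOnWith (convex_Icc a b)
    (fun y hy => ((hg.differentiableOn (by norm_num)) y hy).hasDerivWithinAt) hL hc hx⟩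

theorem integral_Ioo_div_sqrt_sq_sub_sq {r : ℝ} (hr : 0 < r) (h : ℝ → ℝ) :
    ∫ x in Ioo (-r) r, h x / √(r ^ 2 - x ^ 2) =
      ∫ θ in -(π / 2)..π / 2, h (r * sin θ) := by
  have himage : (fun θ => r * sin θ) '' Ioo (-(π / 2)) (π / 2) = Ioo (-r) r := by
    rw [show (fun θ => r * sin θ) = (r * ·) ∘ sin from rfl, image_comp,
      show sin '' Ioo (-(π / 2)) (π / 2) = Ioo (-1) 1 from
        sinPartialHomeomorph.image_source_eq_target, image_mul_left_Ioo hr]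
    simp
  rw [← himage, integral_image_eq_integral_abs_deriv_smul measurableSet_Ioo
      (fun θ _ => ((hasDerivAt_sin θ).const_mul r).hasDerivWithinAt)
      ((mul_right_injective₀ hr.ne').comp_injOn (injOn_sin.mono Ioo_subset_Icc_self)),
    intervalIntegral.integral_of_le (by linarith [pi_pos]), integral_Ioc_eq_integral_Ioo]
  refine setIntegral_congr_fun measurableSet_Ioo fun θ hθ => ?_
  have hcos : 0 < r * cos θ := mul_pos hr (cos_pos_of_mem_Ioo hθ)
  have hsqrt : √(r ^ 2 - (r * sin θ) ^ 2) = r * cos θ := by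
    rw [← sqrt_sq hcos.le]
    congr 1
    linear_combination (-r ^ 2) * sin_sq_add_cos_sq θ
  simp only [smul_eq_mul, hsqrt, abs_of_pos hcos]
  exact mul_div_cancel₀ _ hcos.ne'

theorem integral_sin_sq_mul_affine (a b : ℝ) :
    ∫ θ in -(π / 2)..π / 2, sin θ ^ 2 * (a + b * sin θ) = π / 2 * a := by
  have hsplit : (fun θ => sin θ ^ 2 * (a + b * sin θ)) =
      fun θ => a * sin θ ^ 2 + b * sin θ ^ 3 := by
    ext θ; ring
  rw [hsplit, intervalIntegral.integral_add (Continuous.intervalIntegrable (by fun_prop) _ _)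
      (Continuous.intervalIntegrable (by fun_prop) _ _),
    intervalIntegral.integral_const_mul, intervalIntegral.integral_const_mul,
    integral_sin_sq, integral_sin_pow_three]
  simp only [sin_neg, cos_neg, sin_pi_div_two, cos_pi_div_two]
  ring

theorem abs_integral_sin_sq_mul_comp_sub_le {g : ℝ → ℝ} {r K M : ℝ} (hr : 0 ≤ r)
    (hM : 0 ≤ M) (hg : ContinuousOn g (Icc (-r) r))
    (hT : ∀ x ∈ Icc (-r) r, |g x - g 0 - K * x| ≤ M * x ^ 2) :
    |(∫ θ in -(π / 2)..π / 2, sin θ ^ 2 * g (r * sin θ)) - π / 2 * g 0| ≤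
      π * M * r ^ 2 := by
  have hmaps : ∀ θ, r * sin θ ∈ Icc (-r) r := fun θ =>
    ⟨by nlinarith [neg_one_le_sin θ], by nlinarith [sin_le_one θ]⟩
  have hint : IntervalIntegrable (fun θ => sin θ ^ 2 * g (r * sin θ)) volume
      (-(π / 2)) (π / 2) :=
    (ContinuousOn.mul (by fun_prop) (hg.comp (by fun_prop) fun θ _ => hmaps θ)).intervalIntegrable
  rw [← integral_sin_sq_mul_affine (g 0) (K * r),
    ← intervalIntegral.integral_sub hint (Continuous.intervalIntegrable (by fun_prop) _ _),
    ← Real.norm_eq_abs]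
  calc _ ≤ M * r ^ 2 * |π / 2 - -(π / 2)| :=
        intervalIntegral.norm_integral_le_of_norm_le_const fun θ _ => ?_
    _ = π * M * r ^ 2 := by rw [abs_of_nonneg (by linarith [pi_pos])]; ring
  calc ‖sin θ ^ 2 * g (r * sin θ) - sin θ ^ 2 * (g 0 + K * r * sin θ)‖
        = sin θ ^ 2 * |g (r * sin θ) - g 0 - K * (r * sin θ)| := by
          rw [← mul_sub, Real.norm_eq_abs, abs_mul, abs_sq]
          ring_nf
    _ ≤ 1 * (M * (r * sin θ) ^ 2) :=
        mul_le_mul (sin_sq_le_one θ) (hT _ (hmaps θ)) (abs_nonneg _) zero_le_one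
    _ ≤ M * r ^ 2 := by
        rw [one_mul, mul_pow]
        exact mul_le_mul_of_nonneg_left
          (mul_le_of_le_one_right (sq_nonneg r) (sin_sq_le_one θ)) hM

/-- The asymptotic expansion behind `J(q₀, a)` in the Example of subsection 7.2 of the
paper: for a C² function `g` on `[−1, 1]`,
`∫_{−r}^{r} x² g(x)(r² − x²)^{−1/2} dx = (π/2) g(0) r² + O(r⁴)` as `r → 0`. -/
theorem statement14 (g : ℝ → ℝ) (hg : ContDiffOn ℝ 2 g (Set.Icc (-1 : ℝ) 1)) :
    ∃ C > 0, ∀ r : ℝ, 0 < r → r ≤ 1 →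
      |(∫ x in Set.Ioo (-r) r, x ^ 2 * g x / Real.sqrt (r ^ 2 - x ^ 2)) -
          (Real.pi / 2) * g 0 * r ^ 2| ≤ C * r ^ 4 := by
  obtain ⟨K, M, hM, hT⟩ := hg.exists_abs_sub_sub_mul_le (c := 0) (by norm_num) (by norm_num)
  refine ⟨π * M + 1, by positivity, fun r hr hr1 => ?_⟩
  have hsub : Icc (-r) r ⊆ Icc (-1) 1 := Icc_subset_Icc (by linarith) hr1
  have herr := abs_integral_sin_sq_mul_comp_sub_le hr.le hM (hg.continuousOn.mono hsub)
    (fun x hx => by simpa using hT x (hsub hx))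
  rw [integral_Ioo_div_sqrt_sq_sub_sq hr]
  calc |(∫ θ in -(π / 2)..π / 2, (r * sin θ) ^ 2 * g (r * sin θ)) - π / 2 * g 0 * r ^ 2|
      = |r ^ 2 * ((∫ θ in -(π / 2)..π / 2, sin θ ^ 2 * g (r * sin θ)) - π / 2 * g 0)| := by
        simp_rw [mul_pow, mul_assoc, intervalIntegral.integral_const_mul]
        ring_nf
    _ = r ^ 2 * |(∫ θ in -(π / 2)..π / 2, sin θ ^ 2 * g (r * sin θ)) - π / 2 * g 0| := by
        rw [abs_mul, abs_sq]
    _ ≤ r ^ 2 * (π * M * r ^ 2) := by gcongr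
    _ ≤ (π * M + 1) * r ^ 4 := by nlinarith [pow_pos hr 4]
end
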